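/- The lamp action of the lamplighter group on {0,1}^E does not have the shadowing (pseudo-orbit tracing) property: for every δ > 0 smaller than the distance between the all-0 and all-1 configurations, and every ε > 0, there is an ε-pseudo-orbit that is not δ-shadowed by any orbit. -/

import Mathlib

/-!
The lamp action of the lamplighter group on `{0,1}^(ℤ+½)` does not have the
shadowing (pseudo-orbit tracing) property: for every `δ > 0` smaller than the
distance between the all-`0` and all-`1` configurations, and every `ε > 0`,
there is an `ε`-pseudo-orbit (e.g. the one induced by lamps arranged on a
cycle `ℤ/2k` with `2^{-k} < ε`, lifted periodically) which is not `δ`-shadowed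
by any genuine orbit.  The lamplighter group is realized as the subgroup of
`Equiv.Perm LampConf` generated by `a` and `b`, with the distance
`d(x,y) = Σᵢ 2^{-|i|} [xᵢ ≠ yᵢ]`.
-/

abbrev LampConf : Type := ℤ → ZMod 2

def lampA : Equiv.Perm LampConf :=
  (Equiv.addRight (-1 : ℤ)).arrowCongr (Equiv.refl (ZMod 2))

def lampFlip : LampConf := fun i => if i = -1 then 1 else 0

def lampB : Equiv.Perm LampConf := lampA.trans (Equiv.addLeft lampFlip)

noncomputable def lampDist (x y : LampConf) : ℝ :=
  ∑' i : ℤ, if x i = y i then 0 else (2 : ℝ)⁻¹ ^ i.natAbs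

/-- The lamplighter group, as the subgroup of permutations of lamp
configurations generated by `a` and `b`. -/
def LL : Subgroup (Equiv.Perm LampConf) := Subgroup.closure {lampA, lampB}

def aLL : LL := ⟨lampA, Subgroup.subset_closure (by simp)⟩

def bLL : LL := ⟨lampB, Subgroup.subset_closure (by simp)⟩

/-!
The pseudo-orbit is `g ↦ periodize n (g 0)` (`g 0` is finitely supported): the orbit of `0`
under the lamplighter over `ℤ/n`, lifted periodically. It commutes with `a` exactly, and with
`b` up to the lamps at `-1 + nℤ`, `-1` excepted, all of weight `O(2^{-n})`. To rule out a
shadowing point `x`, translate by a configuration supported in a window of diameter `< n` placed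
one period away from the origin: this leaves `x` unchanged near the origin, while periodization
wraps the window back onto the origin, where it was chosen to be `x + 1`.
-/

open Function

lemma Int.add_mul_ne_of_abs_sub_lt {i j n m : ℤ} (hm : m ≠ 0) (h : |i - j| < n) :
    i + n * m ≠ j := by
  intro hij
  have hn : n ≠ 0 := (lt_of_le_of_lt (abs_nonneg _) h).ne'
  have hdvd : n ∣ j - i := ⟨m, by rw [← hij]; ring⟩
  have := Int.eq_zero_of_abs_lt_dvd hdvd (by rwa [abs_sub_comm])
  exact hm ((mul_eq_zero.1 (by linarith)).resolve_left hn)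

lemma Function.HasFiniteSupport.comp_equiv_iff {α β M : Type*} [Zero M] (e : α ≃ β)
    {y : β → M} : (y ∘ e).HasFiniteSupport ↔ y.HasFiniteSupport :=
  ⟨fun h => by simpa [comp_def] using h.comp_of_injective e.symm.injective,
    fun h => h.comp_of_injective e.injective⟩

section Periodize

variable {M : Type*} [AddCommMonoid M]

noncomputable def periodize (n : ℤ) (y : ℤ → M) : ℤ → M :=
  fun i => ∑ᶠ m : ℤ, y (i + n * m)

lemma periodize_apply_eq {n i : ℤ} {y : ℤ → M} (m₀ : ℤ)
    (h : ∀ m ≠ m₀, y (i + n * m) = 0) : periodize n y i = y (i + n * m₀) :=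
  finsum_eq_single _ m₀ h

lemma periodize_comp_add_one (n : ℤ) (y : ℤ → M) :
    periodize n (fun i => y (i + 1)) = fun i => periodize n y (i + 1) :=
  funext fun _ => finsum_congr fun _ => by ring_nf

lemma periodize_add {n : ℤ} (hn : n ≠ 0) {y z : ℤ → M} (hy : y.HasFiniteSupport)
    (hz : z.HasFiniteSupport) : periodize n (y + z) = periodize n y + periodize n z := by
  funext i
  have hinj : Injective fun m : ℤ => i + n * m :=
    (add_right_injective i).comp (mul_right_injective₀ hn)
  exact finsum_add_distrib (hy.fun_comp_of_injective hinj) (hz.fun_comp_of_injective hinj)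

end Periodize

lemma lampA_apply (x : LampConf) (i : ℤ) : lampA x i = x (i + 1) := by
  simp [lampA, Equiv.arrowCongr]

lemma lampA_inv_apply (x : LampConf) (i : ℤ) : lampA⁻¹ x i = x (i - 1) := by
  have : lampA (fun j => x (j - 1)) = x := funext fun j => by simp [lampA_apply]
  rw [Equiv.Perm.inv_eq_iff_eq.2 this.symm]

lemma lampA_zpow_apply (n : ℤ) (x : LampConf) (i : ℤ) : (lampA ^ n) x i = x (i + n) := by
  induction n using Int.induction_on generalizing x with
  | zero => simp
  | succ n ih => rw [zpow_add_one, Equiv.Perm.mul_apply, ih, lampA_apply, add_assoc]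
  | pred n ih => rw [zpow_sub_one, Equiv.Perm.mul_apply, ih, lampA_inv_apply, add_sub_assoc]

lemma lampB_eq (x : LampConf) : lampB x = lampFlip + lampA x := rfl

lemma lampB_eq_addLeft_mul : lampB = Equiv.addLeft lampFlip * lampA := rfl

lemma lampFlip_eq_single : lampFlip = Pi.single (-1) 1 := by
  funext i
  simp [lampFlip, Pi.single_apply]

lemma lampFlip_hasFiniteSupport : lampFlip.HasFiniteSupport := by
  rw [lampFlip_eq_single]
  exact (Set.finite_singleton _).subset Pi.support_single_subset

def finSuppStabilizer : Subgroup (Equiv.Perm LampConf) where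
  carrier := {g | ∀ y : LampConf, (g y).HasFiniteSupport ↔ y.HasFiniteSupport}
  mul_mem' hg hh y := (hg _).trans (hh y)
  one_mem' _ := Iff.rfl
  inv_mem' {g} hg y := by simpa using (hg (g⁻¹ y)).symm

lemma lampA_mem_finSuppStabilizer : lampA ∈ finSuppStabilizer :=
  fun _ => HasFiniteSupport.comp_equiv_iff _

lemma addLeft_mem_finSuppStabilizer {c : LampConf} (hc : c.HasFiniteSupport) :
    Equiv.addLeft c ∈ finSuppStabilizer := fun y =>
  ⟨fun h => by simpa using hc.neg.add h, hc.add⟩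

lemma LL_le_finSuppStabilizer : LL ≤ finSuppStabilizer := by
  refine Subgroup.closure_le _ |>.2 ?_
  rintro g (rfl | rfl)
  · exact lampA_mem_finSuppStabilizer
  · exact mul_mem (addLeft_mem_finSuppStabilizer lampFlip_hasFiniteSupport)
      lampA_mem_finSuppStabilizer

lemma hasFiniteSupport_apply_zero_of_mem_LL {g : Equiv.Perm LampConf} (hg : g ∈ LL) :
    (g 0).HasFiniteSupport :=
  (LL_le_finSuppStabilizer hg 0).2 (by simp [HasFiniteSupport])

def translationsInLL : AddSubgroup LampConf where
  carrier := {c | Equiv.addLeft c ∈ LL}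
  zero_mem' := by simp [Equiv.addLeft_zero]
  add_mem' {c d} hc hd := by simpa [Equiv.addLeft_add] using LL.mul_mem hc hd
  neg_mem' {c} hc := by simpa [Equiv.neg_addLeft] using LL.inv_mem hc

lemma lampFlip_mem_translationsInLL : lampFlip ∈ translationsInLL := by
  have : Equiv.addLeft lampFlip = lampB * lampA⁻¹ := by
    rw [lampB_eq_addLeft_mul, mul_inv_cancel_right]
  change Equiv.addLeft lampFlip ∈ LL
  rw [this]
  exact mul_mem bLL.2 (inv_mem aLL.2)

lemma lampA_zpow_mem_translationsInLL (n : ℤ) {c : LampConf} (hc : c ∈ translationsInLL) :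
    (lampA ^ n) c ∈ translationsInLL := by
  have : Equiv.addLeft ((lampA ^ n) c) = lampA ^ n * Equiv.addLeft c * (lampA ^ n)⁻¹ := by
    ext y i
    simp [← zpow_neg, lampA_zpow_apply]
  change Equiv.addLeft _ ∈ LL
  rw [this]
  exact mul_mem (mul_mem (zpow_mem aLL.2 n) hc) (inv_mem (zpow_mem aLL.2 n))

lemma single_mem_translationsInLL (j : ℤ) : Pi.single j 1 ∈ translationsInLL := by
  have : Pi.single j 1 = (lampA ^ (-1 - j)) lampFlip := by
    funext i
    simp only [lampA_zpow_apply, lampFlip_eq_single, Pi.single_apply]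
    congr 1
    exact propext (by omega)
  rw [this]
  exact lampA_zpow_mem_translationsInLL _ lampFlip_mem_translationsInLL

lemma addLeft_mem_LL {c : LampConf} (hc : c.HasFiniteSupport) : Equiv.addLeft c ∈ LL := by
  have hfin : (support c).Finite := hc
  have hsum : c = ∑ j ∈ hfin.toFinset, Pi.single j (c j) := by
    funext i
    rw [Finset.sum_apply, Finset.sum_pi_single]
    by_cases hi : c i = 0 <;> simp [hi]
  change c ∈ translationsInLL
  rw [hsum]
  refine sum_mem fun j _ => ?_
  obtain h | h : c j = 0 ∨ c j = 1 := by generalize c j = a; revert a; decide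
  · simp [h, zero_mem]
  · simpa [h] using single_mem_translationsInLL j

noncomputable def lampWeight (i : ℤ) : ℝ := (2 : ℝ)⁻¹ ^ i.natAbs

lemma lampWeight_nonneg : 0 ≤ lampWeight := fun _ => by unfold lampWeight; positivity

lemma summable_lampWeight : Summable lampWeight := by
  have h := summable_geometric_of_lt_one (by norm_num) (by norm_num : (2 : ℝ)⁻¹ < 1)
  exact .of_nat_of_neg (by simpa [lampWeight] using h) (by simpa [lampWeight] using h)

lemma lampDist_eq_tsum_indicator (x y : LampConf) :
    lampDist x y = ∑' i, {i | x i ≠ y i}.indicator lampWeight i := by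
  unfold lampDist
  congr 1 with i
  by_cases h : x i = y i <;> simp [h, lampWeight]

lemma hasSum_lampWeight : HasSum lampWeight (lampDist (fun _ => 0) (fun _ => 1)) := by
  rw [lampDist_eq_tsum_indicator]
  simpa using summable_lampWeight.hasSum

lemma lampDist_self (x : LampConf) : lampDist x x = 0 := by
  simp [lampDist]

lemma lampDist_add_right (x y z : LampConf) : lampDist (x + z) (y + z) = lampDist x y := by
  simp [lampDist]

lemma sum_le_lampDist {x y : LampConf} {F : Finset ℤ} (h : ∀ i ∈ F, x i ≠ y i) :
    ∑ i ∈ F, lampWeight i ≤ lampDist x y := by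
  rw [lampDist_eq_tsum_indicator]
  calc ∑ i ∈ F, lampWeight i = ∑ i ∈ F, {i | x i ≠ y i}.indicator lampWeight i :=
        Finset.sum_congr rfl fun i hi => (Set.indicator_of_mem (h i hi) _).symm
    _ ≤ _ := (summable_lampWeight.indicator _).sum_le_tsum F
        fun i _ => Set.indicator_nonneg (fun j _ => lampWeight_nonneg j) i

lemma lampDist_le_tsum_compl {x y : LampConf} {s : Finset ℤ} (h : ∀ i ∈ s, x i = y i) :
    lampDist x y ≤ ∑' i : {i // i ∉ s}, lampWeight i := by
  rw [lampDist_eq_tsum_indicator]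
  refine ((summable_lampWeight.indicator _).tsum_le_tsum (fun i => ?_)
    (summable_lampWeight.indicator _)).trans_eq (tsum_subtype ((s : Set ℤ)ᶜ) lampWeight).symm
  exact Set.indicator_le_indicator_of_subset (s := {i | x i ≠ y i}) (t := (↑s)ᶜ)
    (fun i hi his => hi (h i his)) lampWeight_nonneg i

noncomputable def cyclePseudoOrbit (n : ℤ) (g : LL) : LampConf :=
  periodize n ((g : Equiv.Perm LampConf) 0)

lemma cyclePseudoOrbit_aLL_mul (n : ℤ) (g : LL) :
    cyclePseudoOrbit n (aLL * g) = lampA (cyclePseudoOrbit n g) := by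
  funext i
  simp only [lampA_apply]
  exact congrFun (periodize_comp_add_one n _) i

lemma cyclePseudoOrbit_bLL_mul {n : ℤ} (hn : n ≠ 0) (g : LL) :
    cyclePseudoOrbit n (bLL * g) = periodize n lampFlip + lampA (cyclePseudoOrbit n g) := by
  have hg := hasFiniteSupport_apply_zero_of_mem_LL g.2
  rw [← cyclePseudoOrbit_aLL_mul]
  exact periodize_add hn lampFlip_hasFiniteSupport
    ((lampA_mem_finSuppStabilizer _).2 hg)

lemma lampDist_cyclePseudoOrbit_bLL_mul {n : ℤ} (hn : n ≠ 0) (g : LL) :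
    lampDist (cyclePseudoOrbit n (bLL * g)) (lampB (cyclePseudoOrbit n g)) =
      lampDist (periodize n lampFlip) lampFlip := by
  rw [cyclePseudoOrbit_bLL_mul hn, lampB_eq, lampDist_add_right]

lemma periodize_lampFlip_apply {n i : ℤ} (h : |i + 1| < n) :
    periodize n lampFlip i = lampFlip i := by
  rw [periodize_apply_eq 0 fun m hm => if_neg (Int.add_mul_ne_of_abs_sub_lt hm (by simpa)),
    mul_zero, add_zero]

lemma exists_ne_cyclePseudoOrbit (x : LampConf) {F : Finset ℤ} {n : ℤ}
    (hF : ∀ i ∈ F, ∀ j ∈ F, |i - j| < n) :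
    ∃ g : LL, ∀ i ∈ F, (g : Equiv.Perm LampConf) x i ≠ cyclePseudoOrbit n g i := by
  set u : LampConf := (F : Set ℤ).indicator (x + 1)
  set c : LampConf := fun j => u (j - n)
  have hu : u.HasFiniteSupport := F.finite_toSet.subset (Set.support_indicator_subset)
  have hc : c.HasFiniteSupport := hu.fun_comp_of_injective (sub_left_injective)
  refine ⟨⟨Equiv.addLeft c, addLeft_mem_LL hc⟩, fun i hi => ?_⟩
  have hci : c i = 0 := Set.indicator_of_notMem (fun h => (le_abs_self n).not_gt (by simpa using hF i hi _ h)) _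
  have hperiod : cyclePseudoOrbit n ⟨Equiv.addLeft c, addLeft_mem_LL hc⟩ i = x i + 1 := by
    change periodize n (c + 0) i = x i + 1
    rw [add_zero, periodize_apply_eq (y := c) 1 fun m hm => Set.indicator_of_notMem (fun h => ?_) _]
    · change u (i + n * 1 - n) = x i + 1
      rw [mul_one, add_sub_cancel_right]
      exact Set.indicator_of_mem hi _
    · exact Int.add_mul_ne_of_abs_sub_lt (sub_ne_zero.2 hm) (hF i hi _ h) (by ring)
  change c i + x i ≠ _
  rw [hci, zero_add, hperiod]
  exact (succ_ne_self _).symm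

/-- No shadowing for the lamp action. -/
theorem lamp_action_no_shadowing :
    ∀ δ : ℝ, 0 < δ →
      δ < lampDist (fun _ => 0) (fun _ => 1) →
      ∀ ε : ℝ, 0 < ε →
        ∃ φ : LL → LampConf,
          (∀ g : LL, lampDist (φ (aLL * g)) (lampA (φ g)) < ε ∧
            lampDist (φ (bLL * g)) (lampB (φ g)) < ε) ∧
          ¬ ∃ x : LampConf, ∀ g : LL,
              lampDist ((g : Equiv.Perm LampConf) x) (φ g) < δ := by
  intro δ _ hδ ε hε
  obtain ⟨F, hF⟩ : ∃ F : Finset ℤ, δ < ∑ i ∈ F, lampWeight i :=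
    (hasSum_lampWeight.eventually (Ioi_mem_nhds hδ)).exists
  obtain ⟨s, hs⟩ : ∃ s : Finset ℤ, ∑' i : {i // i ∉ s}, lampWeight i < ε :=
    ((tendsto_tsum_compl_atTop_zero lampWeight).eventually (gt_mem_nhds hε)).exists
  set M : ℕ := (F ∪ s).sup Int.natAbs
  have hM : ∀ i ∈ F ∪ s, i.natAbs ≤ M := fun i hi => Finset.le_sup hi
  set n : ℤ := 2 * M + 2
  refine ⟨cyclePseudoOrbit n, fun g => ⟨?_, ?_⟩, ?_⟩
  · rwa [cyclePseudoOrbit_aLL_mul, lampDist_self]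
  · rw [lampDist_cyclePseudoOrbit_bLL_mul (by omega)]
    refine (lampDist_le_tsum_compl fun i hi => periodize_lampFlip_apply ?_).trans_lt hs
    have := hM i (Finset.mem_union_right _ hi)
    rw [Int.abs_eq_natAbs]; omega
  · rintro ⟨x, hx⟩
    obtain ⟨g, hg⟩ := exists_ne_cyclePseudoOrbit x (F := F) (n := n) fun i hi j hj => by
      have := hM i (Finset.mem_union_left _ hi)
      have := hM j (Finset.mem_union_left _ hj)
      rw [Int.abs_eq_natAbs]; omega
    exact (hx g).not_ge (hF.le.trans (sum_le_lampDist hg))
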